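/- Let h be a Steinhaus or Rademacher random multiplicative function and λ(n) real numbers, and let P(n) denote the largest prime factor of n. Then for any 0 < q ≤ 1 and x ≥ 2, E|∑_{n≤x, P(n)>√x} h(n)λ(n)|^{2q} ≤ 2 E|∑_{n≤x} h(n)λ(n)|^{2q}. -/

import Mathlib

open MeasureTheory ProbabilityTheory Finset Classical

/-- `h` is a Steinhaus random multiplicative function. -/
def IsSteinhausRMF {Ω : Type*} [MeasureSpace Ω] (h : ℕ → Ω → ℂ) : Prop :=
  (∀ n, Measurable (h n)) ∧
  (∀ m n : ℕ, 0 < m → 0 < n → ∀ ω, h (m * n) ω = h m ω * h n ω) ∧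
  (∀ ω, h 1 ω = 1) ∧
  iIndepFun (fun p : Nat.Primes => h p) volume ∧
  (∀ p : ℕ, p.Prime →
    Measure.map (h p) volume =
      Measure.map (fun t : ℝ => Complex.exp (2 * Real.pi * Complex.I * t))
        (volume.restrict (Set.Ioc (0 : ℝ) 1)))

/-- `h` is a Rademacher random multiplicative function. -/
def IsRademacherRMF {Ω : Type*} [MeasureSpace Ω] (h : ℕ → Ω → ℂ) : Prop :=
  (∀ n, Measurable (h n)) ∧
  (∀ n : ℕ, Squarefree n → ∀ ω, h n ω = ∏ p ∈ n.primeFactors, h p ω) ∧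
  (∀ n : ℕ, ¬ Squarefree n → ∀ ω, h n ω = 0) ∧
  iIndepFun (fun p : Nat.Primes => h p) volume ∧
  (∀ p : ℕ, p.Prime →
    volume {ω | h p ω = 1} = 1 / 2 ∧ volume {ω | h p ω = -1} = 1 / 2)

/-!
Flip the sign of `h p` for every prime `p > √x`. The values at the primes are independent and
symmetric, so the flipped function has the same law as `h`. An integer `n ≤ x` has at most one
prime factor `p > √x`, and only to the first power, so the flip changes the sign of exactly the
terms with `P(n) > √x`: the large-prime sum is `(S - S') / 2`, where `S` is the full sum and `S'`
its flipped copy. Finally `‖(a - b) / 2‖ ^ r ≤ ‖a‖ ^ r + ‖b‖ ^ r` for every `r ≥ 0`, and `S'` has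
the same law as `S`.
-/

lemma ProbabilityTheory.iIndepFun.identDistrib_piecewise_neg {Ω ι E : Type*}
    [MeasurableSpace Ω] {μ : Measure Ω} [MeasurableSpace E] [Neg E] [MeasurableNeg E]
    {X : ι → Ω → E} (hX : ∀ i, Measurable (X i)) (hind : iIndepFun X μ) (s : Set ι)
    (hsym : ∀ i ∈ s, μ.map (fun ω => -X i ω) = μ.map (X i)) :
    IdentDistrib (fun ω => s.piecewise (fun i => -X i ω) (fun i => X i ω))
      (fun ω i => X i ω) μ μ := by
  set flipAt : ∀ i, E → E := fun i z => if i ∈ s then -z else z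
  have hflipAt : ∀ i, Measurable (flipAt i) := fun i => by
    by_cases hi : i ∈ s <;> simp only [flipAt, hi, if_true, if_false] <;> fun_prop
  have hY : ∀ i, Measurable (flipAt i ∘ X i) := fun i => (hflipAt i).comp (hX i)
  have hlaw : ∀ i, μ.map (flipAt i ∘ X i) = μ.map (X i) := fun i => by
    by_cases hi : i ∈ s
    · simp only [flipAt, hi, if_true]
      exact hsym i hi
    · simp only [flipAt, hi, if_false]; rfl
  refine ⟨(measurable_pi_lambda _ hY).aemeasurable,
    (measurable_pi_lambda _ hX).aemeasurable, ?_⟩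
  change μ.map (fun ω i => (flipAt i ∘ X i) ω) = _
  rw [(hind.comp flipAt hflipAt).map_fun_eq_infinitePi_map hY,
    hind.map_fun_eq_infinitePi_map hX]
  simp_rw [hlaw]

lemma map_exp_two_pi_mul_I_restrict_Ioc :
    (volume.restrict (Set.Ioc (0 : ℝ) 1)).map
        (fun t : ℝ => Complex.exp (2 * Real.pi * Complex.I * t)) =
      (volume : Measure (AddCircle (1 : ℝ))).map (fun y => (AddCircle.toCircle y : ℂ)) := by
  have : Fact ((0 : ℝ) < 1) := ⟨one_pos⟩
  have hmk := AddCircle.measurePreserving_mk (1 : ℝ) 0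
  rw [zero_add] at hmk
  rw [← hmk.map_eq, Measure.map_map (by fun_prop) AddCircle.measurable_mk']
  congr 1
  ext1 t
  simp only [Function.comp_apply, AddCircle.toCircle_apply_mk, Circle.coe_exp]
  push_cast
  ring_nf

lemma map_neg_map_toCircle :
    ((volume : Measure (AddCircle (1 : ℝ))).map (fun y => (AddCircle.toCircle y : ℂ))).map Neg.neg =
      (volume : Measure (AddCircle (1 : ℝ))).map (fun y => (AddCircle.toCircle y : ℂ)) := by
  have hc : Continuous (fun y : AddCircle (1 : ℝ) => (AddCircle.toCircle y : ℂ)) := by fun_prop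
  have half : (AddCircle.toCircle ((1 / 2 : ℝ) : AddCircle (1 : ℝ)) : ℂ) = -1 := by
    rw [AddCircle.toCircle_apply_mk, Circle.coe_exp]
    push_cast
    rw [show (2 * Real.pi / 1 * (1 / 2) * Complex.I : ℂ) = Real.pi * Complex.I by ring,
      Complex.exp_pi_mul_I]
  have hshift : Neg.neg ∘ (fun y : AddCircle (1 : ℝ) => (AddCircle.toCircle y : ℂ)) =
      (fun y => (AddCircle.toCircle y : ℂ)) ∘ (· + ((1 / 2 : ℝ) : AddCircle (1 : ℝ))) := by
    ext1 y
    simp only [Function.comp_apply, AddCircle.toCircle_add, Circle.coe_mul, half]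
    ring
  rw [Measure.map_map measurable_neg hc.measurable, hshift,
    ← Measure.map_map hc.measurable (measurable_add_const _),
    (measurePreserving_add_right volume _).map_eq]

lemma MeasureTheory.Measure.map_neg_eq_self_of_ae_eq_one_or_neg_one {μ : Measure ℂ}
    (hsupp : ∀ᵐ z ∂μ, z = 1 ∨ z = -1) (hsymm : μ {1} = μ {-1}) : μ.map Neg.neg = μ := by
  have hdecomp : μ {-1} • Measure.dirac (1 : ℂ) + μ {-1} • Measure.dirac (-1 : ℂ) = μ := by
    have hpair : Disjoint ({1} : Set ℂ) {-1} := by norm_num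
    conv_rhs => rw [← Measure.restrict_eq_self_of_ae_mem (s := {1} ∪ {-1}) hsupp]
    rw [Measure.restrict_union hpair (measurableSet_singleton _), Measure.restrict_singleton,
      Measure.restrict_singleton, hsymm]
  rw [← hdecomp, Measure.map_add _ _ measurable_neg, Measure.map_smul, Measure.map_smul,
    Measure.map_dirac' measurable_neg, Measure.map_dirac' measurable_neg, neg_neg, add_comm]

def extendMultiplicatively (z : ℕ → ℂ) (n : ℕ) : ℂ :=
  ∏ p ∈ n.primeFactors, z p ^ n.factorization p

lemma norm_extendMultiplicatively_le_one {z : ℕ → ℂ} (hz : ∀ p, ‖z p‖ ≤ 1) (n : ℕ) :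
    ‖extendMultiplicatively z n‖ ≤ 1 := by
  rw [extendMultiplicatively, norm_prod]
  exact Finset.prod_le_one (fun _ _ => by positivity)
    (fun p _ => by rw [norm_pow]; exact pow_le_one₀ (norm_nonneg _) (hz p))

lemma Nat.factorization_eq_one_of_lt_sq {n p : ℕ} (hp : p.Prime) (hpn : p ∣ n) (hn : n ≠ 0)
    (hnp : n < p ^ 2) : n.factorization p = 1 := by
  refine le_antisymm ?_ ((hp.dvd_iff_one_le_factorization hn).mp hpn)
  by_contra! htwo
  have := Nat.le_of_dvd (Nat.pos_of_ne_zero hn)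
    ((hp.pow_dvd_iff_le_factorization (k := 2) hn).mpr htwo)
  omega

lemma Nat.Prime.eq_of_dvd_of_lt_sq {n p q : ℕ} (hp : p.Prime) (hq : q.Prime) (hpn : p ∣ n)
    (hqn : q ∣ n) (hn : n ≠ 0) (hnp : n < p ^ 2) (hnq : n < q ^ 2) : p = q := by
  by_contra hpq
  have hle := Nat.le_of_dvd (Nat.pos_of_ne_zero hn)
    (((Nat.coprime_primes hp hq).mpr hpq).mul_dvd_of_dvd_of_dvd hpn hqn)
  rcases le_total p q with h | h <;> nlinarith

lemma extendMultiplicatively_piecewise_neg {Q : Set ℕ} {n : ℕ} (hn : n ≠ 0)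
    (hQ : ∀ p ∈ Q, p.Prime → n < p ^ 2) (z : ℕ → ℂ) :
    extendMultiplicatively (Q.piecewise (-z) z) n =
      if ∃ p, p.Prime ∧ p ∣ n ∧ p ∈ Q then -extendMultiplicatively z n
      else extendMultiplicatively z n := by
  have hsign : ∀ p, Q.piecewise (-z) z p ^ n.factorization p =
      (if p ∈ Q then (-1) ^ n.factorization p else 1) * z p ^ n.factorization p := by
    intro p
    by_cases hp : p ∈ Q
    · rw [Set.piecewise_eq_of_mem _ _ _ hp, if_pos hp, Pi.neg_apply, neg_pow]
    · rw [Set.piecewise_eq_of_notMem _ _ _ hp, if_neg hp, one_mul]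
  simp only [extendMultiplicatively, hsign, prod_mul_distrib]
  split_ifs with hlarge
  · obtain ⟨p, hp, hpn, hpQ⟩ := hlarge
    rw [prod_eq_single p, if_pos hpQ,
      Nat.factorization_eq_one_of_lt_sq hp hpn hn (hQ p hpQ hp), pow_one, neg_one_mul]
    · intro q hq hqp
      have hq' := Nat.prime_of_mem_primeFactors hq
      refine if_neg fun hqQ => hqp ?_
      exact hq'.eq_of_dvd_of_lt_sq hp (Nat.dvd_of_mem_primeFactors hq) hpn hn
        (hQ q hqQ hq') (hQ p hpQ hp)
    · exact fun hpf => absurd (Nat.mem_primeFactors.mpr ⟨hp, hpn, hn⟩) hpf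
  · push Not at hlarge
    rw [prod_eq_one, one_mul]
    intro p hp
    rw [if_neg (hlarge p (Nat.prime_of_mem_primeFactors hp) (Nat.dvd_of_mem_primeFactors hp))]

lemma sum_filter_eq_half_sub {Q : Set ℕ} {N : ℕ} (hQ : ∀ p ∈ Q, p.Prime → N < p ^ 2)
    (a z : ℕ → ℂ) :
    ∑ n ∈ (Icc 1 N).filter (fun n => ∃ p, p.Prime ∧ p ∣ n ∧ p ∈ Q),
        a n * extendMultiplicatively z n =
      (∑ n ∈ Icc 1 N, a n * extendMultiplicatively z n -
        ∑ n ∈ Icc 1 N, a n * extendMultiplicatively (Q.piecewise (-z) z) n) / 2 := by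
  rw [eq_div_iff two_ne_zero, ← sum_sub_distrib, sum_filter, sum_mul]
  refine sum_congr rfl fun n hn => ?_
  obtain ⟨hn1, hnN⟩ := mem_Icc.mp hn
  rw [extendMultiplicatively_piecewise_neg (by omega)
    fun p hp hpp => lt_of_le_of_lt hnN (hQ p hp hpp)]
  split_ifs <;> ring

lemma norm_half_sub_rpow_le (a b : ℂ) {r : ℝ} (hr : 0 ≤ r) :
    ‖(a - b) / 2‖ ^ r ≤ ‖a‖ ^ r + ‖b‖ ^ r := by
  have hmax : ‖(a - b) / 2‖ ≤ max ‖a‖ ‖b‖ := by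
    rw [norm_div, Complex.norm_two]
    linarith [norm_sub_le a b, le_max_left ‖a‖ ‖b‖, le_max_right ‖a‖ ‖b‖]
  calc ‖(a - b) / 2‖ ^ r ≤ max ‖a‖ ‖b‖ ^ r := Real.rpow_le_rpow (norm_nonneg _) hmax hr
    _ ≤ ‖a‖ ^ r + ‖b‖ ^ r := by
      rcases max_choice ‖a‖ ‖b‖ with h | h <;> rw [h] <;> simp [Real.rpow_nonneg]

/-- Only the values at the primes are independent, so the sign flip preserves the law of this
vector but not that of `fun q => X q ω`. -/
def primeValues {Ω : Type*} (X : ℕ → Ω → ℂ) (ω : Ω) (q : ℕ) : ℂ :=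
  if q.Prime then X q ω else 0

lemma extendMultiplicatively_primeValues {Ω : Type*} (X : ℕ → Ω → ℂ) (ω : Ω) (n : ℕ) :
    extendMultiplicatively (primeValues X ω) n = extendMultiplicatively (fun p => X p ω) n :=
  prod_congr rfl fun p hp => by rw [primeValues, if_pos (Nat.prime_of_mem_primeFactors hp)]

lemma identDistrib_piecewise_neg_primeValues {Ω : Type*} [MeasurableSpace Ω] {μ : Measure Ω}
    {X : ℕ → Ω → ℂ} (hX : ∀ p : Nat.Primes, Measurable (X p))
    (hind : iIndepFun (fun p : Nat.Primes => X p) μ)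
    (hsym : ∀ p : ℕ, p.Prime → μ.map (fun ω => -X p ω) = μ.map (X p)) (Q : Set ℕ) :
    IdentDistrib (fun ω => Q.piecewise (-primeValues X ω) (primeValues X ω))
      (primeValues X) μ μ := by
  let extend : (Nat.Primes → ℂ) → ℕ → ℂ := fun z q => if hq : q.Prime then z ⟨q, hq⟩ else 0
  have hextend : Measurable extend := measurable_pi_lambda _ fun q => by
    by_cases hq : q.Prime <;> simp only [extend, hq, dif_pos, dif_neg, not_false_iff] <;> fun_prop
  have hflip : (fun ω => Q.piecewise (-primeValues X ω) (primeValues X ω)) =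
      extend ∘ fun ω =>
        {p : Nat.Primes | (p : ℕ) ∈ Q}.piecewise (fun p => -X p ω) (fun p => X p ω) := by
    ext ω q
    by_cases hq : q.Prime
    · simp only [Function.comp_apply, extend, dif_pos hq, Set.piecewise, primeValues, if_pos hq,
        Pi.neg_apply]
      exact if_congr Iff.rfl rfl rfl
    · simp [extend, primeValues, hq, Set.piecewise]
  have hvalues : primeValues X = extend ∘ fun ω p => X p ω := by
    ext ω q
    by_cases hq : q.Prime <;> simp [extend, primeValues, hq]
  rw [hflip, hvalues]
  exact (hind.identDistrib_piecewise_neg hX _ fun p _ => hsym p p.2).comp hextend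

theorem integral_norm_sum_filter_rpow_le {Ω : Type*} [MeasurableSpace Ω] {μ : Measure Ω}
    [IsFiniteMeasure μ] {Y : Ω → ℕ → ℂ} {Q : Set ℕ}
    (hflip : IdentDistrib (fun ω => Q.piecewise (-Y ω) (Y ω)) Y μ μ)
    (hbdd : ∀ᵐ ω ∂μ, ∀ p, ‖Y ω p‖ ≤ 1) (a : ℕ → ℂ) {N : ℕ}
    (hQ : ∀ p ∈ Q, p.Prime → N < p ^ 2) {r : ℝ} (hr : 0 ≤ r) :
    ∫ ω, ‖∑ n ∈ (Icc 1 N).filter (fun n => ∃ p, p.Prime ∧ p ∣ n ∧ p ∈ Q),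
        a n * extendMultiplicatively (Y ω) n‖ ^ r ∂μ ≤
      2 * ∫ ω, ‖∑ n ∈ Icc 1 N, a n * extendMultiplicatively (Y ω) n‖ ^ r ∂μ := by
  set F : (ℕ → ℂ) → ℝ := fun z => ‖∑ n ∈ Icc 1 N, a n * extendMultiplicatively z n‖ ^ r
  have hF : Measurable F := by
    simp only [F, extendMultiplicatively]
    fun_prop
  have hFbdd : ∀ᵐ ω ∂μ, ‖F (Y ω)‖ ≤ (∑ n ∈ Icc 1 N, ‖a n‖) ^ r := by
    filter_upwards [hbdd] with ω hω
    rw [Real.norm_of_nonneg (by positivity)]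
    refine Real.rpow_le_rpow (norm_nonneg _) ((norm_sum_le _ _).trans (sum_le_sum fun n _ => ?_)) hr
    rw [norm_mul]
    exact mul_le_of_le_one_right (norm_nonneg _) (norm_extendMultiplicatively_le_one hω n)
  have hFY : Integrable (fun ω => F (Y ω)) μ :=
    .of_bound (hF.comp_aemeasurable hflip.aemeasurable_snd).aestronglyMeasurable _ hFbdd
  have hlaw := hflip.comp hF
  have hFflipY : Integrable (fun ω => F (Q.piecewise (-Y ω) (Y ω))) μ :=
    hlaw.integrable_iff.mpr hFY
  calc _ = ∫ ω, ‖(∑ n ∈ Icc 1 N, a n * extendMultiplicatively (Y ω) n -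
        ∑ n ∈ Icc 1 N, a n * extendMultiplicatively (Q.piecewise (-Y ω) (Y ω)) n) / 2‖ ^ r ∂μ := by
        simp only [sum_filter_eq_half_sub hQ]
    _ ≤ ∫ ω, F (Y ω) + F (Q.piecewise (-Y ω) (Y ω)) ∂μ :=
        integral_mono_of_nonneg (ae_of_all _ fun _ => by positivity) (hFY.add hFflipY)
          (ae_of_all _ fun _ => norm_half_sub_rpow_le _ _ hr)
    _ = 2 * ∫ ω, F (Y ω) ∂μ := by
        rw [integral_add hFY hFflipY,
          show ∫ ω, F (Q.piecewise (-Y ω) (Y ω)) ∂μ = ∫ ω, F (Y ω) ∂μ from hlaw.integral_eq]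
        ring

lemma Nat.floor_lt_sq_of_sqrt_lt {x : ℝ} {p : ℕ} (hp : Real.sqrt x < p) : ⌊x⌋₊ < p ^ 2 := by
  have hp0 : (0 : ℝ) < p := (Real.sqrt_nonneg x).trans_lt hp
  refine (Nat.floor_lt' (pow_ne_zero 2 (by exact_mod_cast hp0.ne'))).mpr ?_
  exact_mod_cast (Real.sqrt_lt' hp0).mp hp

theorem integral_norm_sum_large_prime_rpow_le {Ω : Type*} [MeasurableSpace Ω] {μ : Measure Ω}
    {h : ℕ → Ω → ℂ} (hmeas : ∀ p : Nat.Primes, Measurable (h p))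
    (hind : iIndepFun (fun p : Nat.Primes => h p) μ)
    (hsym : ∀ p : ℕ, p.Prime → μ.map (fun ω => -h p ω) = μ.map (h p))
    (hbdd : ∀ p : ℕ, p.Prime → ∀ᵐ ω ∂μ, ‖h p ω‖ ≤ 1) (c : ℕ → ℂ)
    (hrep : ∀ n ≠ 0, ∀ ω, h n ω = c n * extendMultiplicatively (fun p => h p ω) n)
    (lam : ℕ → ℝ) {r : ℝ} (hr : 0 ≤ r) (x : ℝ) :
    ∫ ω, ‖∑ n ∈ (Icc 1 ⌊x⌋₊).filter (fun n => ∃ p : ℕ, p.Prime ∧ p ∣ n ∧ Real.sqrt x < p),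
        h n ω * lam n‖ ^ r ∂μ ≤
      2 * ∫ ω, ‖∑ n ∈ Icc 1 ⌊x⌋₊, h n ω * lam n‖ ^ r ∂μ := by
  have := hind.isProbabilityMeasure
  have hsum : ∀ s ⊆ Icc 1 ⌊x⌋₊, ∀ ω, ∑ n ∈ s, h n ω * lam n =
      ∑ n ∈ s, c n * lam n * extendMultiplicatively (primeValues h ω) n := fun s hs ω =>
    sum_congr rfl fun n hn => by
      rw [extendMultiplicatively_primeValues, hrep n (by linarith [(mem_Icc.mp (hs hn)).1]) ω]
      ring
  have hbdd' : ∀ᵐ ω ∂μ, ∀ q, ‖primeValues h ω q‖ ≤ 1 := ae_all_iff.mpr fun q => by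
    by_cases hq : q.Prime
    · simpa [primeValues, hq] using hbdd q hq
    · simp [primeValues, hq]
  simp only [hsum _ (filter_subset _ _), hsum _ subset_rfl]
  exact integral_norm_sum_filter_rpow_le
    (identDistrib_piecewise_neg_primeValues hmeas hind hsym _) hbdd' _
    (fun p hp _ => Nat.floor_lt_sq_of_sqrt_lt hp) hr

namespace IsSteinhausRMF

variable {Ω : Type*} [MeasureSpace Ω] {h : ℕ → Ω → ℂ}

lemma map_neg (hS : IsSteinhausRMF h) {p : ℕ} (hp : p.Prime) :
    volume.map (fun ω => -h p ω) = volume.map (h p) := by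
  obtain ⟨hmeas, -, -, -, hlaw⟩ := hS
  change volume.map (Neg.neg ∘ h p) = _
  rw [← Measure.map_map measurable_neg (hmeas p), hlaw p hp,
    map_exp_two_pi_mul_I_restrict_Ioc, map_neg_map_toCircle]

lemma norm_le_one (hS : IsSteinhausRMF h) {p : ℕ} (hp : p.Prime) :
    ∀ᵐ ω, ‖h p ω‖ ≤ 1 := by
  obtain ⟨hmeas, -, -, -, hlaw⟩ := hS
  refine ae_of_ae_map (p := fun z : ℂ => ‖z‖ ≤ 1) (hmeas p).aemeasurable ?_
  have hc : Continuous fun y : AddCircle (1 : ℝ) => (AddCircle.toCircle y : ℂ) := by fun_prop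
  rw [hlaw p hp, map_exp_two_pi_mul_I_restrict_Ioc,
    ae_map_iff hc.aemeasurable (measurableSet_le measurable_norm measurable_const)]
  exact ae_of_all _ fun y => (Circle.norm_coe _).le

lemma eq_extendMultiplicatively (hS : IsSteinhausRMF h) {n : ℕ} (hn : n ≠ 0) (ω : Ω) :
    h n ω = extendMultiplicatively (fun p => h p ω) n := by
  obtain ⟨-, hmul, hone, -⟩ := hS
  have hpow : ∀ p k, p ≠ 0 → h (p ^ k) ω = h p ω ^ k := fun p k hp => by
    induction k with
    | zero => simp [hone]
    | succ k ih => rw [pow_succ, hmul _ _ (by positivity) (by omega), ih, pow_succ]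
  have hcop : ∀ a b, a.Coprime b → h (a * b) ω = h a ω * h b ω := fun a b hab => by
    rcases Nat.eq_zero_or_pos a with rfl | ha
    · simp [(Nat.coprime_zero_left _).mp hab, hone]
    rcases Nat.eq_zero_or_pos b with rfl | hb
    · simp [(Nat.coprime_zero_right _).mp hab, hone]
    exact hmul a b ha hb ω
  rw [Nat.multiplicative_factorization (fun k => h k ω) hcop (hone ω) hn,
    Nat.prod_factorization_eq_prod_primeFactors]
  exact prod_congr rfl fun p hp => hpow p _ (Nat.prime_of_mem_primeFactors hp).ne_zero

end IsSteinhausRMF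

namespace IsRademacherRMF

variable {Ω : Type*} [MeasureSpace Ω] {h : ℕ → Ω → ℂ}

lemma ae_eq_one_or_neg_one (hR : IsRademacherRMF h) {p : ℕ} (hp : p.Prime) :
    ∀ᵐ ω, h p ω = 1 ∨ h p ω = -1 := by
  obtain ⟨hmeas, -, -, hind, hlaw⟩ := hR
  have := hind.isProbabilityMeasure
  have hdisj : Disjoint {ω | h p ω = 1} {ω | h p ω = -1} :=
    Set.disjoint_left.mpr fun ω (h1 : h p ω = 1) (h2 : h p ω = -1) => by norm_num [h1] at h2
  have hfull : volume ({ω | h p ω = 1} ∪ {ω | h p ω = -1}) = 1 := by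
    rw [measure_union hdisj (hmeas p (measurableSet_singleton _)), (hlaw p hp).1, (hlaw p hp).2,
      ENNReal.add_halves]
  exact (prob_compl_eq_zero_iff ((hmeas p (measurableSet_singleton _)).union
    (hmeas p (measurableSet_singleton _)))).mpr hfull

lemma map_neg (hR : IsRademacherRMF h) {p : ℕ} (hp : p.Prime) :
    volume.map (fun ω => -h p ω) = volume.map (h p) := by
  have hsupp := hR.ae_eq_one_or_neg_one hp
  obtain ⟨hmeas, -, -, -, hlaw⟩ := hR
  change volume.map (Neg.neg ∘ h p) = _
  rw [← Measure.map_map measurable_neg (hmeas p)]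
  refine Measure.map_neg_eq_self_of_ae_eq_one_or_neg_one ((ae_map_iff (hmeas p).aemeasurable
    ((measurableSet_singleton _).union (measurableSet_singleton _))).mpr hsupp) ?_
  rw [Measure.map_apply (hmeas p) (measurableSet_singleton _),
    Measure.map_apply (hmeas p) (measurableSet_singleton _)]
  exact (hlaw p hp).1.trans (hlaw p hp).2.symm

lemma norm_le_one (hR : IsRademacherRMF h) {p : ℕ} (hp : p.Prime) :
    ∀ᵐ ω, ‖h p ω‖ ≤ 1 := by
  filter_upwards [hR.ae_eq_one_or_neg_one hp] with ω hω
  rcases hω with hω | hω <;> simp [hω]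

lemma eq_extendMultiplicatively (hR : IsRademacherRMF h) (n : ℕ) (ω : Ω) :
    h n ω = (if Squarefree n then 1 else 0) * extendMultiplicatively (fun p => h p ω) n := by
  obtain ⟨-, hsf, hnsf, -⟩ := hR
  by_cases hsq : Squarefree n
  · rw [if_pos hsq, one_mul, hsf n hsq ω, extendMultiplicatively]
    refine prod_congr rfl fun p hp => ?_
    rw [Nat.factorization_eq_one_of_squarefree hsq (Nat.prime_of_mem_primeFactors hp)
      (Nat.dvd_of_mem_primeFactors hp), pow_one]
  · rw [if_neg hsq, zero_mul, hnsf n hsq ω]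

end IsRademacherRMF

theorem large_prime_factor_moment_le_general
    {Ω : Type*} [MeasureSpace Ω]
    (h : ℕ → Ω → ℂ) (hh : IsSteinhausRMF h ∨ IsRademacherRMF h)
    (lam : ℕ → ℝ) (q : ℝ) (hq0 : 0 < q) (x : ℝ) :
    (∫ ω, ‖∑ n ∈ (Finset.Icc 1 ⌊x⌋₊).filter
          (fun n => ∃ p : ℕ, p.Prime ∧ p ∣ n ∧ Real.sqrt x < p),
        h n ω * lam n‖ ^ (2 * q)) ≤
      2 * ∫ ω, ‖∑ n ∈ Finset.Icc 1 ⌊x⌋₊, h n ω * lam n‖ ^ (2 * q) := by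
  have hr : 0 ≤ 2 * q := by positivity
  rcases hh with hS | hR
  · exact integral_norm_sum_large_prime_rpow_le (fun p => hS.1 p) hS.2.2.2.1
      (fun _ => hS.map_neg) (fun _ => hS.norm_le_one) 1
      (fun n hn ω => (hS.eq_extendMultiplicatively hn ω).trans (one_mul _).symm) lam hr x
  · exact integral_norm_sum_large_prime_rpow_le (fun p => hR.1 p) hR.2.2.2.1
      (fun _ => hR.map_neg) (fun _ => hR.norm_le_one) _
      (fun n _ ω => hR.eq_extendMultiplicatively n ω) lam hr x

theorem large_prime_factor_moment_le
    {Ω : Type*} [MeasureSpace Ω] [IsProbabilityMeasure (volume : Measure Ω)]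
    (h : ℕ → Ω → ℂ) (hh : IsSteinhausRMF h ∨ IsRademacherRMF h)
    (lam : ℕ → ℝ) (q : ℝ) (hq0 : 0 < q) (hq1 : q ≤ 1) (x : ℝ) (hx : 2 ≤ x) :
    (∫ ω, ‖∑ n ∈ (Finset.Icc 1 ⌊x⌋₊).filter
          (fun n => ∃ p : ℕ, p.Prime ∧ p ∣ n ∧ Real.sqrt x < p),
        h n ω * lam n‖ ^ (2 * q)) ≤
      2 * ∫ ω, ‖∑ n ∈ Finset.Icc 1 ⌊x⌋₊, h n ω * lam n‖ ^ (2 * q) :=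
  large_prime_factor_moment_le_general h hh lam q hq0 x
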